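/- arXiv:1705.01658 — 3 statements merged into one kernel-verified Lean document; each statement's English description precedes it below -/
import Mathlib

section
/- Let θ ∈ (0,1) and let (x_i)_{i≥2} be a nonincreasing sequence of positive reals, only finitely many nonzero. Then ∑_{i≥2} x_i^θ ≥ (∑_{i≥2} x_i)^θ + (2 − 2^θ) ∑_{i≥3} x_i^θ. -/
/-!
Concavity of `t ↦ t ^ θ` makes its increments over intervals of a fixed length decrease, so adding
a term `x k ≤ x 0 ≤ S` to a partial sum `S` raises `S ^ θ` by at most `(2 ^ θ - 1) * x k ^ θ`
(the increment over `[x k, 2 * x k]`). Summing these gives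
`(∑ x) ^ θ ≤ x 0 ^ θ + (2 ^ θ - 1) * ∑_{k ≥ 1} x k ^ θ`, which is the claim rearranged.
-/

open Real Finset

theorem ConcaveOn.map_add_sub_map_le {𝕜 : Type*} [Field 𝕜] [LinearOrder 𝕜] [IsStrictOrderedRing 𝕜]
    {s : Set 𝕜} {f : 𝕜 → 𝕜} (hf : ConcaveOn 𝕜 s f) {x y h : 𝕜} (hx : x ∈ s) (hyh : y + h ∈ s)
    (hxy : x ≤ y) (hh : 0 ≤ h) : f (y + h) - f y ≤ f (x + h) - f x := by
  rcases (add_le_add hxy hh).eq_or_lt with hxyh | hxyh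
  · obtain rfl : h = 0 := by linarith
    obtain rfl : x = y := by linarith
    simp
  -- `y` and `x + h` are the convex combinations of `x` and `y + h` with swapped weights `t`, `1 - t`
  set t := h / (y + h - x)
  have hd : 0 < y + h - x := by linarith
  have ht0 : 0 ≤ t := div_nonneg hh hd.le
  have ht1 : 0 ≤ 1 - t := sub_nonneg.2 ((div_le_one hd).2 (by linarith))
  have hty : t * (y + h - x) = h := div_mul_cancel₀ h hd.ne'
  have h₁ := hf.2 hx hyh ht0 ht1 (by ring)
  have h₂ := hf.2 hx hyh ht1 ht0 (by ring)
  simp only [smul_eq_mul] at h₁ h₂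
  rw [show t * x + (1 - t) * (y + h) = y by linear_combination -hty] at h₁
  rw [show (1 - t) * x + t * (y + h) = x + h by linear_combination hty] at h₂
  linarith

theorem Real.add_rpow_le_rpow_add_mul_rpow {θ a b : ℝ} (hθ0 : 0 ≤ θ) (hθ1 : θ ≤ 1) (hb : 0 ≤ b)
    (hba : b ≤ a) : (a + b) ^ θ ≤ a ^ θ + (2 ^ θ - 1) * b ^ θ := by
  have h := (concaveOn_rpow hθ0 hθ1).map_add_sub_map_le (Set.mem_Ici.2 hb)
    (Set.mem_Ici.2 (by linarith : 0 ≤ a + b)) hba hb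
  rw [← two_mul, mul_rpow zero_le_two hb] at h
  linarith

theorem Real.rpow_sum_range_succ_le {θ : ℝ} (hθ0 : 0 ≤ θ) (hθ1 : θ ≤ 1) {x : ℕ → ℝ}
    (hx : Antitone x) (hpos : ∀ i, 0 ≤ x i) (n : ℕ) :
    (∑ i ∈ range (n + 1), x i) ^ θ ≤ x 0 ^ θ + (2 ^ θ - 1) * ∑ i ∈ range n, x (i + 1) ^ θ := by
  induction n with
  | zero => simp
  | succ n ih =>
    have hle : x (n + 1) ≤ ∑ i ∈ range (n + 1), x i :=
      (hx (Nat.zero_le _)).trans (single_le_sum (fun i _ => hpos i) (by simp))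
    have := add_rpow_le_rpow_add_mul_rpow hθ0 hθ1 (hpos (n + 1)) hle
    rw [sum_range_succ x (n + 1), sum_range_succ (fun i => x (i + 1) ^ θ) n]
    linarith

theorem finsum_eq_sum_range_of_eq_zero {M : Type*} [AddCommMonoid M] {f : ℕ → M} {n : ℕ}
    (hf : ∀ i, n ≤ i → f i = 0) : ∑ᶠ i, f i = ∑ i ∈ range n, f i :=
  finsum_eq_sum_of_support_subset f fun i hi => by
    simpa using not_le.1 fun h => hi (hf i h)

theorem stmt2 (θ : ℝ) (hθ : 0 < θ) (hθ1 : θ < 1) (x : ℕ → ℝ)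
    (hmono : Antitone x) (hpos : ∀ i, 0 ≤ x i)
    (hfin : (Function.support x).Finite) :
    ∑ᶠ i, x i ^ θ ≥ (∑ᶠ i, x i) ^ θ + (2 - 2 ^ θ) * ∑ᶠ i, x (i + 1) ^ θ := by
  obtain ⟨N, hN⟩ := hfin.bddAbove
  have hzero : ∀ i, N < i → x i = 0 := fun i hi =>
    Function.notMem_support.1 fun h => (hN h).not_gt hi
  rw [finsum_eq_sum_range_of_eq_zero (n := N + 1) fun i hi => hzero i hi,
    finsum_eq_sum_range_of_eq_zero (n := N + 1) fun i hi => by simp [hzero i hi, hθ.ne'],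
    finsum_eq_sum_range_of_eq_zero (n := N) fun i hi => by simp [hzero (i + 1) (by omega), hθ.ne'],
    sum_range_succ']
  have := rpow_sum_range_succ_le hθ.le hθ1.le hmono hpos N
  linarith
end

section
/- For θ, δ ∈ (0,1), ∑_{n≥1} e^{−δ n^θ} ≤ e^{(θ−1)/θ} · (2/θ) · (2(1−θ)/θ)^{1/θ − 1} · δ^{−1/θ}. -/
/-!
Split `e^{-δ m^θ} = e^{-b} e^{-b}` with `b = (δ/2) m^θ`. Since `t^k e^{-t} ≤ k^k e^{-k}`, taking
`k = (1 - θ)/θ` bounds the first factor by a constant times `b^{-k}`, i.e. by a constant times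
`m^{θ-1}`. By concavity of `x ↦ x^θ`, `(δθ/2) m^{θ-1} e^{-b}` is at most the telescoping difference
`f(m - 1) - f(m)` for `f(x) = e^{-(δ/2) x^θ}`, and these differences sum to `f(0) = 1`.
-/

open Real Filter Topology

theorem tsum_le_mul_of_le_mul_sub_succ {a f : ℕ → ℝ} {C : ℝ} (ha : ∀ n, 0 ≤ a n)
    (hf : Antitone f) (hf_lim : Tendsto f atTop (𝓝 0)) (h : ∀ n, a n ≤ C * (f n - f (n + 1))) :
    ∑' n, a n ≤ C * f 0 := by
  have htel : HasSum (fun n ↦ f n - f (n + 1)) (f 0) := by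
    rw [hasSum_iff_tendsto_nat_of_nonneg (fun n ↦ sub_nonneg.2 (hf n.le_succ))]
    simp only [Finset.sum_range_sub']
    simpa using (tendsto_const_nhds (x := f 0)).sub hf_lim
  have hCtel := htel.mul_left C
  exact hasSum_le h (hCtel.summable.of_nonneg_of_le ha h).hasSum hCtel

theorem rpow_mul_exp_neg_le {t k : ℝ} (ht : 0 < t) (hk : 0 < k) :
    t ^ k * exp (-t) ≤ k ^ k * exp (-k) := by
  rw [rpow_def_of_pos ht, rpow_def_of_pos hk, ← exp_add, ← exp_add, exp_le_exp]
  have hlog : log (t / k) ≤ t / k - 1 := log_le_sub_one_of_pos (div_pos ht hk)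
  rw [log_div ht.ne' hk.ne'] at hlog
  have : k * (log t - log k) ≤ t - k :=
    calc _ ≤ k * (t / k - 1) := mul_le_mul_of_nonneg_left hlog hk.le
      _ = t - k := by field_simp
  linarith

theorem sub_mul_exp_neg_le_exp_neg_sub_exp_neg (a b : ℝ) :
    (b - a) * exp (-b) ≤ exp (-a) - exp (-b) := by
  have h := add_one_le_exp (b - a)
  have : exp (b - a) * exp (-b) = exp (-a) := by rw [← exp_add]; ring_nf
  nlinarith [exp_pos (-b)]

theorem mul_rpow_sub_one_mul_sub_le_rpow_sub_rpow {θ x y : ℝ} (hθ : 0 ≤ θ) (hθ1 : θ ≤ 1)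
    (hx : 0 ≤ x) (hy : 0 < y) :
    θ * y ^ (θ - 1) * (y - x) ≤ y ^ θ - x ^ θ := by
  have hbern : (1 + (x / y - 1)) ^ θ ≤ 1 + θ * (x / y - 1) :=
    rpow_one_add_le_one_add_mul_self (by have := div_nonneg hx hy.le; linarith) hθ hθ1
  rw [add_sub_cancel, div_rpow hx hy.le, div_le_iff₀ (rpow_pos_of_pos hy θ)] at hbern
  have hyθ : y ^ θ = y ^ (θ - 1) * y := by rw [rpow_sub_one hy.ne', div_mul_cancel₀ _ hy.ne']
  have : (1 + θ * (x / y - 1)) * y ^ θ = y ^ θ - θ * y ^ (θ - 1) * (y - x) := by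
    rw [hyθ]; field_simp; ring
  linarith

theorem antitone_exp_neg_mul_natCast_rpow {c θ : ℝ} (hc : 0 ≤ c) (hθ : 0 ≤ θ) :
    Antitone fun n : ℕ ↦ exp (-c * (n : ℝ) ^ θ) := fun m n hmn ↦ by
  simp only [neg_mul, exp_le_exp, neg_le_neg_iff]
  gcongr

theorem tendsto_exp_neg_mul_natCast_rpow {c θ : ℝ} (hc : 0 < c) (hθ : 0 < θ) :
    Tendsto (fun n : ℕ ↦ exp (-c * (n : ℝ) ^ θ)) atTop (𝓝 0) := by
  simp only [neg_mul]
  exact tendsto_exp_neg_atTop_nhds_zero.comp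
    (((tendsto_rpow_atTop hθ).comp tendsto_natCast_atTop_atTop).const_mul_atTop hc)

theorem exp_neg_mul_rpow_le_mul_sub {θ δ k x : ℝ} (hθ : 0 < θ) (hδ : 0 < δ) (hk : 0 < k)
    (hkθ : θ * k = 1 - θ) (hx : 0 ≤ x) :
    exp (-δ * (x + 1) ^ θ) ≤ k ^ k * exp (-k) * (δ / 2) ^ (-k) / (δ / 2 * θ) *
      (exp (-(δ / 2) * x ^ θ) - exp (-(δ / 2) * (x + 1) ^ θ)) := by
  set c := δ / 2 with hc_def
  set y := x + 1 with hy_def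
  set b := c * y ^ θ with hb_def
  set K := k ^ k * exp (-k) * c ^ (-k) with hK_def
  have hc : 0 < c := by positivity
  have hy : 0 < y := by positivity
  have hb : 0 < b := by positivity
  have hθ1 : θ ≤ 1 := by nlinarith [mul_pos hθ hk]
  have hdecay : exp (-b) ≤ K * y ^ (θ - 1) := by
    have h := rpow_mul_exp_neg_le hb hk
    rw [mul_rpow hc.le (rpow_nonneg hy.le θ), ← rpow_mul hy.le, hkθ] at h
    have hy_inv : y ^ (θ - 1) = (y ^ (1 - θ))⁻¹ := by rw [← rpow_neg hy.le, neg_sub]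
    rw [hK_def, rpow_neg hc.le, hy_inv, ← div_eq_mul_inv, ← div_eq_mul_inv,
      le_div_iff₀ (rpow_pos_of_pos hy _), le_div_iff₀ (rpow_pos_of_pos hc _)]
    linarith
  have hgap : c * θ * y ^ (θ - 1) * exp (-b) ≤ exp (-(c * x ^ θ)) - exp (-b) := by
    refine le_trans ?_ (sub_mul_exp_neg_le_exp_neg_sub_exp_neg _ _)
    gcongr
    have h := mul_rpow_sub_one_mul_sub_le_rpow_sub_rpow hθ.le hθ1 hx hy
    rw [hy_def, add_sub_cancel_left, mul_one] at h
    rw [hb_def, ← mul_sub, mul_assoc]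
    exact mul_le_mul_of_nonneg_left h hc.le
  calc exp (-δ * y ^ θ) = exp (-b) * exp (-b) := by rw [← exp_add, hb_def, hc_def]; ring_nf
    _ ≤ K * y ^ (θ - 1) * exp (-b) := by gcongr
    _ = K / (c * θ) * (c * θ * y ^ (θ - 1) * exp (-b)) := by field_simp
    _ ≤ K / (c * θ) * (exp (-c * x ^ θ) - exp (-c * y ^ θ)) := by
      rw [neg_mul, neg_mul]; exact mul_le_mul_of_nonneg_left hgap (by positivity)

theorem exp_mul_rpow_mul_rpow_eq {θ δ k : ℝ} (hθ : 0 < θ) (hδ : 0 < δ) (hk : 0 ≤ k)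
    (hkθ : θ * k = 1 - θ) :
    exp ((θ - 1) / θ) * (2 / θ) * (2 * (1 - θ) / θ) ^ (1 / θ - 1) * δ ^ (-(1 / θ)) =
      k ^ k * exp (-k) * (δ / 2) ^ (-k) / (δ / 2 * θ) := by
  have hk_eq : (1 - θ) / θ = k := by rw [← hkθ, mul_div_cancel_left₀ _ hθ.ne']
  have hk1 : 1 / θ = k + 1 := by rw [← hk_eq]; field_simp; ring
  rw [show (θ - 1) / θ = -k by rw [← hk_eq]; ring, hk1, add_sub_cancel_right, mul_div_assoc,
    hk_eq, mul_rpow two_pos.le hk, div_rpow hδ.le two_pos.le, neg_add, rpow_add hδ, rpow_neg_one,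
    rpow_neg hδ.le, rpow_neg (by positivity)]
  field_simp

theorem stmt8_general (θ δ : ℝ) (hθ : 0 < θ) (hθ1 : θ < 1) (hδ : 0 < δ) :
    ∑' n : ℕ, Real.exp (-δ * ((n : ℝ) + 1) ^ θ)
      ≤ Real.exp ((θ - 1) / θ) * (2 / θ) * (2 * (1 - θ) / θ) ^ (1 / θ - 1)
          * δ ^ (-(1 / θ)) := by
  set k := (1 - θ) / θ
  have hk : 0 < k := div_pos (by linarith) hθ
  have hkθ : θ * k = 1 - θ := mul_div_cancel₀ _ hθ.ne'
  rw [exp_mul_rpow_mul_rpow_eq hθ hδ hk.le hkθ]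
  calc ∑' n : ℕ, exp (-δ * ((n : ℝ) + 1) ^ θ)
      ≤ k ^ k * exp (-k) * (δ / 2) ^ (-k) / (δ / 2 * θ) * exp (-(δ / 2) * ((0 : ℕ) : ℝ) ^ θ) :=
        tsum_le_mul_of_le_mul_sub_succ (fun _ ↦ (exp_pos _).le)
          (antitone_exp_neg_mul_natCast_rpow (by positivity) hθ.le)
          (tendsto_exp_neg_mul_natCast_rpow (by positivity) hθ) fun n ↦ by
            simpa using exp_neg_mul_rpow_le_mul_sub hθ hδ hk hkθ n.cast_nonneg
    _ = k ^ k * exp (-k) * (δ / 2) ^ (-k) / (δ / 2 * θ) := by simp [zero_rpow hθ.ne']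

theorem stmt8 (θ δ : ℝ) (hθ : 0 < θ) (hθ1 : θ < 1) (hδ : 0 < δ) (hδ1 : δ < 1) :
    ∑' n : ℕ, Real.exp (-δ * ((n : ℝ) + 1) ^ θ)
      ≤ Real.exp ((θ - 1) / θ) * (2 / θ) * (2 * (1 - θ) / θ) ^ (1 / θ - 1)
          * δ ^ (-(1 / θ)) :=
  stmt8_general θ δ hθ hθ1 hδ
end

section
/- For every θ ∈ (0,1) and δ ∈ (0, 1/e), ∏_{n∈ℤ} (1 − e^{−δ|n|^θ})^{−1} ≤ (1/δ)^{C(θ) δ^{−1/θ}} for some constant C(θ) > 0 depending only on θ, where |0| := 1. -/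
open Real

/-- The weight `|n| = max {1, n, -n}` from the paper, as a real number. -/
noncomputable def wt (n : ℤ) : ℝ := max 1 |(n : ℝ)|

section helpers
open Finset


private lemma gsum_le (θ δ : ℝ) (hθ : 0 < θ) (hθ1 : θ < 1) (hδ0 : 0 < δ)
    (hδe : δ < (Real.exp 1)⁻¹) (G : Finset ℕ) :
    ∑ k ∈ G, Real.exp (-δ * (max 1 (k : ℝ)) ^ θ)
      ≤ (2 + 2 * (Nat.factorial (Nat.ceil (2 / θ)) : ℝ)) * δ ^ (-(1 / θ)) := by
  classical
  set m : ℕ := Nat.ceil (2 / θ) with hm_def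
  set R : ℝ := δ ^ (-(1 / θ)) with hR_def
  have hδinv : Real.exp 1 < δ⁻¹ := by
    rw [← inv_inv (Real.exp 1)]
    exact inv_strictAnti₀ hδ0 hδe
  have hδ1 : δ < 1 := by
    have h1 : (Real.exp 1)⁻¹ < 1 := by
      rw [inv_lt_one_iff₀]; right; nlinarith [Real.exp_one_gt_d9]
    linarith
  have hRdef2 : R = δ⁻¹ ^ (1 / θ) := by
    rw [hR_def, Real.rpow_neg hδ0.le, ← Real.inv_rpow hδ0.le]
  have hR2 : 2 ≤ R := by
    rw [hRdef2]
    have h1 : δ⁻¹ ^ (1 : ℝ) ≤ δ⁻¹ ^ (1 / θ) := by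
      apply Real.rpow_le_rpow_of_exponent_le
      · nlinarith [Real.exp_one_gt_d9]
      · rw [le_div_iff₀ hθ]; linarith
    rw [Real.rpow_one] at h1
    nlinarith [Real.exp_one_gt_d9]
  have hR0 : 0 < R := by linarith
  have hm : 2 / θ ≤ (m : ℝ) := Nat.le_ceil _
  have hθm : 2 ≤ θ * m := by
    rw [div_le_iff₀ hθ] at hm; nlinarith
  rw [← Finset.sum_filter_add_sum_filter_not G (fun k : ℕ => (k : ℝ) ≤ R)]
  have hb1 : ∑ k ∈ G.filter (fun k : ℕ => (k : ℝ) ≤ R),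
      Real.exp (-δ * (max 1 (k : ℝ)) ^ θ) ≤ 2 * R := by
    calc ∑ k ∈ G.filter (fun k : ℕ => (k : ℝ) ≤ R), Real.exp (-δ * (max 1 (k : ℝ)) ^ θ)
        ≤ (G.filter (fun k : ℕ => (k : ℝ) ≤ R)).card • (1 : ℝ) := by
          apply Finset.sum_le_card_nsmul
          intro k _
          rw [Real.exp_le_one_iff]
          have h1 : (0:ℝ) < max 1 (k:ℝ) := by positivity
          have h2 : (0:ℝ) ≤ (max 1 (k:ℝ)) ^ θ := Real.rpow_nonneg h1.le θ
          nlinarith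
      _ ≤ ((Nat.floor R + 1 : ℕ) : ℝ) := by
          rw [nsmul_eq_mul, mul_one]
          have hsub : G.filter (fun k : ℕ => (k : ℝ) ≤ R) ⊆ Finset.range (Nat.floor R + 1) := by
            intro k hk
            simp only [Finset.mem_filter] at hk
            rw [Finset.mem_range, Nat.lt_succ_iff]
            exact Nat.le_floor hk.2
          exact_mod_cast (Finset.card_le_card hsub).trans (Finset.card_range _).le
      _ ≤ 2 * R := by
          push_cast
          have := Nat.floor_le hR0.le
          linarith
  have hb2 : ∑ k ∈ G.filter (fun k : ℕ => ¬ (k : ℝ) ≤ R),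
      Real.exp (-δ * (max 1 (k : ℝ)) ^ θ) ≤ 2 * (m.factorial : ℝ) * R := by
    set G₂ := G.filter (fun k : ℕ => ¬ (k : ℝ) ≤ R) with hG₂
    have hG₂mem : ∀ k ∈ G₂, R < (k : ℝ) := by
      intro k hk
      simp only [hG₂, Finset.mem_filter] at hk
      linarith [hk.2]
    set A : ℝ := (m.factorial : ℝ) * δ ^ (-(m:ℝ)) * R ^ (2 - θ * m) with hA
    have hA0 : 0 < A := by
      have := Nat.factorial_pos m
      have h1 : (0:ℝ) < δ ^ (-(m:ℝ)) := Real.rpow_pos_of_pos hδ0 _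
      have h2 : (0:ℝ) < R ^ (2 - θ * m) := Real.rpow_pos_of_pos hR0 _
      positivity
    have hpt : ∀ k ∈ G₂, Real.exp (-δ * (max 1 (k : ℝ)) ^ θ) ≤ A * ((k:ℝ)^2)⁻¹ := by
      intro k hk
      have hkR := hG₂mem k hk
      have hk1 : (1:ℝ) ≤ (k:ℝ) := by linarith
      have hk0 : (0:ℝ) < (k:ℝ) := by linarith
      rw [max_eq_right hk1]
      set t : ℝ := δ * (k:ℝ) ^ θ with ht
      have hkθ : (0:ℝ) < (k:ℝ) ^ θ := Real.rpow_pos_of_pos hk0 θ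
      have ht0 : 0 < t := by positivity
      have h1 : Real.exp (-δ * (k:ℝ) ^ θ) ≤ (m.factorial : ℝ) / t ^ m := by
        rw [show -δ * (k:ℝ)^θ = -t by ring, Real.exp_neg]
        rw [inv_le_comm₀ (Real.exp_pos t) (by positivity), inv_div]
        exact Real.pow_div_factorial_le_exp _ ht0.le m
      have h2 : (m.factorial : ℝ) / t ^ m = (m.factorial : ℝ) * δ ^ (-(m:ℝ)) * ((k:ℝ)^θ) ^ (-(m:ℝ)) := by
        rw [ht, mul_pow, div_eq_mul_inv, ← Real.rpow_natCast δ m, ← Real.rpow_natCast ((k:ℝ)^θ) m,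
          mul_inv, ← Real.rpow_neg hδ0.le, ← Real.rpow_neg hkθ.le, mul_assoc]
      have h3 : ((k:ℝ)^θ) ^ (-(m:ℝ)) = (k:ℝ) ^ (2 - θ*(m:ℝ)) * (((k:ℝ):ℝ)^(2:ℕ))⁻¹ := by
        rw [← Real.rpow_mul hk0.le, show θ * (-(m:ℝ)) = (2 - θ*(m:ℝ)) + (-(2:ℕ):ℝ) by push_cast; ring,
          Real.rpow_add hk0, Real.rpow_neg hk0.le, Real.rpow_natCast]
      have h4 : (k:ℝ) ^ (2 - θ*(m:ℝ)) ≤ R ^ (2 - θ*(m:ℝ)) :=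
        Real.rpow_le_rpow_of_nonpos hR0 hkR.le (by linarith)
      calc Real.exp (-δ * (k:ℝ) ^ θ) ≤ (m.factorial : ℝ) / t ^ m := h1
        _ = (m.factorial : ℝ) * δ ^ (-(m:ℝ)) * (((k:ℝ)) ^ (2 - θ*(m:ℝ)) * (((k:ℝ))^(2:ℕ))⁻¹) := by
            rw [h2, h3]
        _ ≤ (m.factorial : ℝ) * δ ^ (-(m:ℝ)) * (R ^ (2 - θ*(m:ℝ)) * (((k:ℝ))^(2:ℕ))⁻¹) := by
            have hpos : (0:ℝ) ≤ (m.factorial : ℝ) * δ ^ (-(m:ℝ)) := by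
              have := Real.rpow_pos_of_pos hδ0 (-(m:ℝ)); positivity
            apply mul_le_mul_of_nonneg_left _ hpos
            apply mul_le_mul_of_nonneg_right h4
            positivity
        _ = A * ((k:ℝ)^2)⁻¹ := by rw [hA]; ring
    have hsum2 : ∑ k ∈ G₂, ((k:ℝ)^2)⁻¹ ≤ 2 / R := by
      set N : ℕ := Nat.floor R with hN
      have hN2 : 2 ≤ N := Nat.le_floor (by exact_mod_cast hR2)
      have hNR : (N:ℝ) ≤ R := Nat.floor_le hR0.le
      set K : ℕ := N + ∑ j ∈ G₂, j with hK
      have hsub : G₂ ⊆ Finset.Ioc N K := by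
        intro k hk
        rw [Finset.mem_Ioc]
        constructor
        · have := hG₂mem k hk
          have : (N:ℝ) < (k:ℝ) := lt_of_le_of_lt hNR this
          exact_mod_cast this
        · calc k ≤ ∑ j ∈ G₂, j := Finset.single_le_sum (fun j _ => Nat.zero_le j) hk
            _ ≤ K := Nat.le_add_left _ _
      calc ∑ k ∈ G₂, ((k:ℝ)^2)⁻¹ ≤ ∑ k ∈ Finset.Ioc N K, ((k:ℝ)^2)⁻¹ := by
            apply Finset.sum_le_sum_of_subset_of_nonneg hsub
            intro i _ _; positivity
        _ ≤ (N:ℝ)⁻¹ - (K:ℝ)⁻¹ := sum_Ioc_inv_sq_le_sub (by omega) (by omega)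
        _ ≤ (N:ℝ)⁻¹ := by
            have : (0:ℝ) ≤ (K:ℝ)⁻¹ := by positivity
            linarith
        _ ≤ 2 / R := by
            have h5 : R - 1 < (N:ℝ) := Nat.sub_one_lt_floor R
            have h6 : R / 2 ≤ (N:ℝ) := by linarith
            have hN0 : (0:ℝ) < (N:ℝ) := by positivity
            rw [inv_eq_one_div, div_le_div_iff₀ hN0 hR0]
            nlinarith
    have hApow : A * (2 / R) = 2 * (m.factorial : ℝ) * R := by
      have e1 : R ^ (2 - θ*(m:ℝ)) = δ ^ ((-(1/θ)) * (2 - θ*(m:ℝ))) := by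
        rw [hR_def, ← Real.rpow_mul hδ0.le]
      have e2 : δ ^ (-(m:ℝ)) * δ ^ ((-(1/θ)) * (2 - θ*(m:ℝ))) = δ ^ ((-(1/θ)) * 2) := by
        rw [← Real.rpow_add hδ0]
        congr 1
        field_simp
        ring
      have e3 : δ ^ ((-(1/θ)) * 2) = R ^ (2:ℕ) := by
        rw [hR_def, ← Real.rpow_natCast (δ ^ (-(1/θ))) 2, ← Real.rpow_mul hδ0.le]
        norm_num
      rw [hA, mul_assoc ((m.factorial : ℝ)), e1, e2, e3]
      field_simp
    calc ∑ k ∈ G₂, Real.exp (-δ * (max 1 (k : ℝ)) ^ θ) ≤ ∑ k ∈ G₂, A * ((k:ℝ)^2)⁻¹ :=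
          Finset.sum_le_sum hpt
      _ = A * ∑ k ∈ G₂, ((k:ℝ)^2)⁻¹ := by rw [Finset.mul_sum]
      _ ≤ A * (2 / R) := by
          apply mul_le_mul_of_nonneg_left hsum2 hA0.le
      _ = 2 * (m.factorial : ℝ) * R := hApow
  calc _ ≤ 2 * R + 2 * (m.factorial : ℝ) * R := add_le_add hb1 hb2
    _ = (2 + 2 * (Nat.factorial (Nat.ceil (2 / θ)) : ℝ)) * δ ^ (-(1 / θ)) := by
        rw [← hm_def, ← hR_def]; ring

private lemma xsum_le (θ δ : ℝ) (hθ : 0 < θ) (hθ1 : θ < 1) (hδ0 : 0 < δ)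
    (hδe : δ < (Real.exp 1)⁻¹) (F : Finset ℤ) :
    ∑ n ∈ F, Real.exp (-δ * wt n ^ θ)
      ≤ 2 * ((2 + 2 * (Nat.factorial (Nat.ceil (2 / θ)) : ℝ)) * δ ^ (-(1 / θ))) := by
  classical
  have hwt : ∀ n : ℤ, wt n = max 1 ((n.natAbs : ℕ) : ℝ) := by
    intro n; rw [wt, Nat.cast_natAbs, Int.cast_abs]
  have h1 : ∀ F' : Finset ℤ, (∀ x ∈ F', ∀ y ∈ F', x.natAbs = y.natAbs → x = y) →
      ∑ n ∈ F', Real.exp (-δ * wt n ^ θ)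
        ≤ (2 + 2 * (Nat.factorial (Nat.ceil (2 / θ)) : ℝ)) * δ ^ (-(1 / θ)) := by
    intro F' hinj
    have he : ∑ n ∈ F', Real.exp (-δ * wt n ^ θ)
        = ∑ k ∈ F'.image Int.natAbs, Real.exp (-δ * (max 1 (k : ℝ)) ^ θ) := by
      rw [Finset.sum_image hinj]
      exact Finset.sum_congr rfl (fun n _ => by rw [hwt n])
    rw [he]
    exact gsum_le θ δ hθ hθ1 hδ0 hδe _
  rw [← Finset.sum_filter_add_sum_filter_not F (fun n : ℤ => 0 ≤ n), two_mul]
  apply add_le_add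
  · apply h1
    intro x hx y hy h
    simp only [Finset.mem_filter] at hx hy
    omega
  · apply h1
    intro x hx y hy h
    simp only [Finset.mem_filter] at hx hy
    omega

private lemma head_le (θ δ : ℝ) (hθ : 0 < θ) (hθ1 : θ < 1) (hδ0 : 0 < δ)
    (hδe : δ < (Real.exp 1)⁻¹) (F : Finset ℤ) :
    ∑ n ∈ F, (if wt n ≤ (Real.log 2 / δ) ^ (1/θ) then Real.log (2/δ) else 0)
      ≤ 6 * δ ^ (-(1/θ)) * Real.log (1/δ) := by
  classical
  set M : ℝ := (Real.log 2 / δ) ^ (1/θ) with hM_def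
  set R : ℝ := δ ^ (-(1 / θ)) with hR_def
  set L : ℝ := Real.log (1/δ) with hL_def
  have hδinv : Real.exp 1 < δ⁻¹ := by
    rw [← inv_inv (Real.exp 1)]
    exact inv_strictAnti₀ hδ0 hδe
  have hδ1 : δ < 1 := by
    have h1 : (Real.exp 1)⁻¹ < 1 := by
      rw [inv_lt_one_iff₀]; right; nlinarith [Real.exp_one_gt_d9]
    linarith
  have hL1 : 1 ≤ L := by
    rw [hL_def, one_div]
    calc (1:ℝ) = Real.log (Real.exp 1) := (Real.log_exp 1).symm
      _ ≤ Real.log δ⁻¹ := Real.log_le_log (Real.exp_pos 1) hδinv.le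
  have hδlog2 : δ ≤ Real.log 2 := by
    have h1 : δ * Real.exp 1 < 1 := by
      have h2 := mul_lt_mul_of_pos_right hδe (Real.exp_pos 1)
      rwa [inv_mul_cancel₀ (ne_of_gt (Real.exp_pos 1))] at h2
    nlinarith [Real.log_two_gt_d9, Real.exp_one_gt_d9, Real.exp_pos 1]
  have hbase1 : 1 ≤ Real.log 2 / δ := by
    rw [le_div_iff₀ hδ0]
    nlinarith [Real.log_two_gt_d9]
  have hM1 : 1 ≤ M := by
    rw [hM_def]
    calc (1:ℝ) = (Real.log 2 / δ) ^ (0:ℝ) := (Real.rpow_zero _).symm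
      _ ≤ (Real.log 2 / δ) ^ (1/θ) :=
        Real.rpow_le_rpow_of_exponent_le hbase1 (by positivity)
  have hMR : M ≤ R := by
    have hRdef2 : R = δ⁻¹ ^ (1 / θ) := by
      rw [hR_def, Real.rpow_neg hδ0.le, ← Real.inv_rpow hδ0.le]
    rw [hM_def, hRdef2, ← one_div δ]
    apply Real.rpow_le_rpow (by positivity) _ (by positivity)
    rw [div_le_div_iff₀ hδ0 hδ0]
    nlinarith [Real.log_two_lt_d9, hδ0]
  have hlog2δ : Real.log (2/δ) ≤ 2 * L := by
    rw [Real.log_div two_ne_zero (ne_of_gt hδ0)]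
    have h2 : Real.log (1/δ) = - Real.log δ := by rw [one_div, Real.log_inv]
    rw [hL_def]
    nlinarith [Real.log_two_lt_d9, hL1, h2]
  have hlog2δ0 : 0 ≤ Real.log (2/δ) := by
    apply Real.log_nonneg
    rw [le_div_iff₀ hδ0]
    linarith
  have hR0 : (0:ℝ) < R := Real.rpow_pos_of_pos hδ0 _
  set k₀ : ℕ := Nat.floor M with hk₀
  have hsub : F.filter (fun n => wt n ≤ M) ⊆ Finset.Icc (-(k₀:ℤ)) (k₀:ℤ) := by
    intro n hn
    simp only [Finset.mem_filter] at hn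
    have h1 : |(n:ℝ)| ≤ M := le_trans (le_max_right 1 _) hn.2
    have h2 : ((n.natAbs : ℕ) : ℝ) ≤ M := by
      rw [Nat.cast_natAbs, Int.cast_abs]; exact h1
    have h3 : n.natAbs ≤ k₀ := Nat.le_floor h2
    rw [Finset.mem_Icc]
    omega
  have hcard : ((F.filter (fun n => wt n ≤ M)).card : ℝ) ≤ 3 * M := by
    have h1 : (F.filter (fun n => wt n ≤ M)).card ≤ 2 * k₀ + 1 := by
      calc (F.filter (fun n => wt n ≤ M)).card ≤ (Finset.Icc (-(k₀:ℤ)) (k₀:ℤ)).card :=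
            Finset.card_le_card hsub
        _ = 2 * k₀ + 1 := by rw [Int.card_Icc]; omega
    have h2 : ((k₀:ℕ) : ℝ) ≤ M := Nat.floor_le (by linarith)
    calc ((F.filter (fun n => wt n ≤ M)).card : ℝ) ≤ ((2 * k₀ + 1 : ℕ) : ℝ) := by exact_mod_cast h1
      _ = 2 * ((k₀:ℕ):ℝ) + 1 := by push_cast; ring
      _ ≤ 3 * M := by linarith
  calc ∑ n ∈ F, (if wt n ≤ M then Real.log (2/δ) else 0)
      = ∑ n ∈ F.filter (fun n => wt n ≤ M), Real.log (2/δ) := (Finset.sum_filter _ _).symm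
    _ = ((F.filter (fun n => wt n ≤ M)).card : ℝ) * Real.log (2/δ) := by
        rw [Finset.sum_const, nsmul_eq_mul]
    _ ≤ (3 * M) * (2 * L) := by
        apply mul_le_mul hcard hlog2δ hlog2δ0 (by linarith)
    _ ≤ 6 * R * L := by nlinarith


private lemma factor_le (θ δ : ℝ) (hθ : 0 < θ) (hθ1 : θ < 1) (hδ0 : 0 < δ)
    (hδe : δ < (Real.exp 1)⁻¹) (n : ℤ) :
    (1 - Real.exp (-δ * wt n ^ θ))⁻¹
      ≤ Real.exp ((if wt n ≤ (Real.log 2 / δ) ^ (1/θ) then Real.log (2/δ) else 0)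
          + 2 * Real.exp (-δ * wt n ^ θ)) := by
  have hδ1 : δ < 1 := by
    have hδinv : Real.exp 1 < δ⁻¹ := by
      rw [← inv_inv (Real.exp 1)]
      exact inv_strictAnti₀ hδ0 hδe
    have h1 : (Real.exp 1)⁻¹ < 1 := by
      rw [inv_lt_one_iff₀]; right; nlinarith [Real.exp_one_gt_d9]
    linarith
  set x : ℝ := Real.exp (-δ * wt n ^ θ) with hx_def
  have hwt1 : (1:ℝ) ≤ wt n := le_max_left _ _
  have hwt0 : (0:ℝ) < wt n := by linarith
  have hwtθ : (1:ℝ) ≤ wt n ^ θ := by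
    calc (1:ℝ) = (1:ℝ) ^ θ := (Real.one_rpow θ).symm
      _ ≤ wt n ^ θ := Real.rpow_le_rpow zero_le_one hwt1 hθ.le
  have hx0 : 0 < x := Real.exp_pos _
  have hx1 : x < 1 := by
    rw [hx_def, Real.exp_lt_one_iff]
    nlinarith
  have hlog2δ0 : 0 ≤ Real.log (2/δ) := by
    apply Real.log_nonneg
    rw [le_div_iff₀ hδ0]
    linarith
  by_cases hhalf : x ≤ 1/2
  · have h1x : 0 < 1 - x := by linarith
    have h2 : (1 - x)⁻¹ ≤ 1 + 2 * x := by
      rw [inv_eq_one_div, div_le_iff₀ h1x]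
      nlinarith
    have h3 : 1 + 2 * x ≤ Real.exp (2 * x) := by
      have := Real.add_one_le_exp (2 * x)
      linarith
    apply (h2.trans h3).trans
    rw [Real.exp_le_exp]
    split_ifs with h
    · linarith
    · linarith
  · push_neg at hhalf
    have hM : wt n ≤ (Real.log 2 / δ) ^ (1/θ) := by
      have h1 : Real.log (1/2) < -δ * wt n ^ θ := by
        calc Real.log (1/2) < Real.log x := Real.log_lt_log (by norm_num) hhalf
          _ = -δ * wt n ^ θ := Real.log_exp _
      rw [one_div, Real.log_inv] at h1
      have h2 : δ * wt n ^ θ < Real.log 2 := by linarith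
      have h3 : wt n ^ θ ≤ Real.log 2 / δ := by
        rw [le_div_iff₀ hδ0]; nlinarith
      calc wt n = (wt n ^ θ) ^ (1/θ) := by
            rw [← Real.rpow_mul hwt0.le, mul_one_div, div_self hθ.ne', Real.rpow_one]
        _ ≤ (Real.log 2 / δ) ^ (1/θ) :=
            Real.rpow_le_rpow (Real.rpow_nonneg hwt0.le θ) h3 (by positivity)
    rw [if_pos hM]
    have hxδ : x ≤ Real.exp (-δ) := by
      rw [hx_def, Real.exp_le_exp]
      nlinarith
    have e1 : Real.exp (-δ) ≤ (1 + δ)⁻¹ := by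
      rw [Real.exp_neg]
      apply inv_anti₀ (by linarith)
      linarith [Real.add_one_le_exp δ]
    have e2 : (1 + δ)⁻¹ ≤ 1 - δ/2 := by
      rw [inv_eq_one_div, div_le_iff₀ (by linarith)]
      nlinarith
    have h1x : δ/2 ≤ 1 - x := by
      have := hxδ.trans (e1.trans e2)
      linarith
    have h4 : (1 - x)⁻¹ ≤ 2/δ := by
      calc (1 - x)⁻¹ ≤ (δ/2)⁻¹ := inv_anti₀ (by positivity) h1x
        _ = 2/δ := by rw [inv_div]
    apply h4.trans
    rw [Real.exp_add, Real.exp_log (by positivity)]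
    nlinarith [Real.exp_pos (2*x), Real.add_one_le_exp (2*x), div_pos two_pos hδ0]

end helpers

theorem stmt10 (θ : ℝ) (hθ : 0 < θ) (hθ1 : θ < 1) :
    ∃ C > (0 : ℝ), ∀ δ : ℝ, 0 < δ → δ < (Real.exp 1)⁻¹ →
      ∏' n : ℤ, (1 - Real.exp (-δ * wt n ^ θ))⁻¹ ≤ (1 / δ) ^ (C * δ ^ (-(1 / θ))) := by
  classical
  set mf : ℝ := (Nat.factorial (Nat.ceil (2 / θ)) : ℝ) with hmf
  have hmf0 : 0 < mf := by
    rw [hmf]; exact_mod_cast Nat.factorial_pos _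
  refine ⟨14 + 8 * mf, by positivity, fun δ hδ0 hδe => ?_⟩
  set R : ℝ := δ ^ (-(1 / θ)) with hR_def
  set L : ℝ := Real.log (1/δ) with hL_def
  have hR0 : (0:ℝ) < R := Real.rpow_pos_of_pos hδ0 _
  have hδinv : Real.exp 1 < δ⁻¹ := by
    rw [← inv_inv (Real.exp 1)]
    exact inv_strictAnti₀ hδ0 hδe
  have hL1 : 1 ≤ L := by
    rw [hL_def, one_div]
    calc (1:ℝ) = Real.log (Real.exp 1) := (Real.log_exp 1).symm
      _ ≤ Real.log δ⁻¹ := Real.log_le_log (Real.exp_pos 1) hδinv.le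
  have key : ∀ F : Finset ℤ, ∏ n ∈ F, (1 - Real.exp (-δ * wt n ^ θ))⁻¹
      ≤ Real.exp (L * ((14 + 8 * mf) * R)) := by
    intro F
    have hfac : ∀ n : ℤ, (0:ℝ) ≤ (1 - Real.exp (-δ * wt n ^ θ))⁻¹ := by
      intro n
      have hwt1 : (1:ℝ) ≤ wt n := le_max_left _ _
      have hwtθ : (1:ℝ) ≤ wt n ^ θ := by
        calc (1:ℝ) = (1:ℝ) ^ θ := (Real.one_rpow θ).symm
          _ ≤ wt n ^ θ := Real.rpow_le_rpow zero_le_one hwt1 hθ.le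
      have hx1 : Real.exp (-δ * wt n ^ θ) < 1 := by
        rw [Real.exp_lt_one_iff]; nlinarith
      have : 0 < 1 - Real.exp (-δ * wt n ^ θ) := by linarith
      positivity
    calc ∏ n ∈ F, (1 - Real.exp (-δ * wt n ^ θ))⁻¹
        ≤ ∏ n ∈ F, Real.exp ((if wt n ≤ (Real.log 2 / δ) ^ (1/θ) then Real.log (2/δ) else 0)
            + 2 * Real.exp (-δ * wt n ^ θ)) := by
          apply Finset.prod_le_prod (fun n _ => hfac n)
            (fun n _ => factor_le θ δ hθ hθ1 hδ0 hδe n)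
      _ = Real.exp (∑ n ∈ F, ((if wt n ≤ (Real.log 2 / δ) ^ (1/θ) then Real.log (2/δ) else 0)
            + 2 * Real.exp (-δ * wt n ^ θ))) := (Real.exp_sum F _).symm
      _ ≤ Real.exp (L * ((14 + 8 * mf) * R)) := by
          rw [Real.exp_le_exp, Finset.sum_add_distrib]
          have h1 := head_le θ δ hθ hθ1 hδ0 hδe F
          have h2 := xsum_le θ δ hθ hθ1 hδ0 hδe F
          have h3 : ∑ n ∈ F, 2 * Real.exp (-δ * wt n ^ θ)
              = 2 * ∑ n ∈ F, Real.exp (-δ * wt n ^ θ) := by rw [Finset.mul_sum]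
          rw [h3]
          rw [← hR_def, ← hL_def] at h1
          rw [← hmf, ← hR_def] at h2
          nlinarith [hR0, hL1, hmf0,
            mul_nonneg (mul_nonneg (by linarith : (0:ℝ) ≤ 8 + 8*mf) hR0.le)
              (by linarith : (0:ℝ) ≤ L - 1)]
  have hRHS : (1/δ : ℝ) ^ ((14 + 8 * mf) * R) = Real.exp (L * ((14 + 8 * mf) * R)) := by
    rw [Real.rpow_def_of_pos (by positivity), hL_def]
  rw [hRHS]
  by_cases hmul : Multipliable (fun n : ℤ => (1 - Real.exp (-δ * wt n ^ θ))⁻¹)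
  · exact le_of_tendsto hmul.hasProd (Filter.Eventually.of_forall key)
  · rw [tprod_eq_one_of_not_multipliable hmul]
    rw [Real.one_le_exp_iff]
    have h5 : 0 < L * ((14 + 8 * mf) * R) :=
      mul_pos (by linarith) (mul_pos (by linarith) hR0)
    linarith
end
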